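/- In dimension d = 1, let W : ℝ → ℝ be twice continuously differentiable with Z = ∫_ℝ e^{-W(v)/θ} dv finite and with M, vM, v²M integrable. Set c = ∫_ℝ v M(v) dv and define ψ(v) = −(1/θ)(v − c) M(v). Then ψ satisfies Q(ψ)(v) = (1/θ) W'(v) M(v) pointwise on ℝ, and consequently the drift coefficient is K = −∫_ℝ v ψ(v) dv = (1/θ) ∫_ℝ (v − c)² M(v) dv. -/

import Mathlib

open MeasureTheory

/-- The one-dimensional Fokker–Planck operator `Q f = (W' f + θ f')'`. -/
noncomputable def Qop1 (θ : ℝ) (W f : ℝ → ℝ) : ℝ → ℝ :=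
  fun v => deriv (fun w => deriv W w * f w + θ * deriv f w) v

/-!
The Gibbs density `M ∝ exp (-W / θ)` has zero flux, `W' M + θ M' = 0`. Hence for `ψ = g M` the flux
is `θ g' M`, which for the affine `g v = -(v - c) / θ` is `-M`; differentiating once more gives
`Q ψ = (W' / θ) M`. The drift coefficient is then `(1/θ) ∫ v (v - c) M`, and since `M` is a
probability density with mean `c`, the term `c ∫ (v - c) M` vanishes, leaving the variance.
-/

namespace FokkerPlanck1D

theorem hasDerivAt_gibbs {W : ℝ → ℝ} {v : ℝ} (hW : DifferentiableAt ℝ W v) (θ Z : ℝ) :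
    HasDerivAt (fun w => Z⁻¹ * Real.exp (-W w / θ))
      (-(deriv W v / θ) * (Z⁻¹ * Real.exp (-W v / θ))) v := by
  have hexp : HasDerivAt (fun w => Real.exp (-W w / θ))
      (Real.exp (-W v / θ) * (-deriv W v / θ)) v :=
    (hW.hasDerivAt.fun_neg.div_const θ).exp
  exact (hexp.const_mul Z⁻¹).congr_deriv (by ring)

theorem integral_gibbs_eq_one {θ : ℝ} {W : ℝ → ℝ}
    (hint : Integrable (fun v => Real.exp (-W v / θ))) :
    ∫ v : ℝ, (∫ w : ℝ, Real.exp (-W w / θ))⁻¹ * Real.exp (-W v / θ) = 1 := by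
  have hpos : 0 < ∫ w : ℝ, Real.exp (-W w / θ) :=
    integral_exp_pos (by simpa only [neg_div] using hint)
  rw [integral_const_mul, inv_mul_cancel₀ hpos.ne']

variable {θ : ℝ} {W M : ℝ → ℝ}

theorem flux_mul_of_zero_flux (hθ : θ ≠ 0) {g : ℝ → ℝ} {v g' : ℝ}
    (hM : HasDerivAt M (-(deriv W v / θ) * M v) v) (hg : HasDerivAt g g' v) :
    deriv W v * (g v * M v) + θ * deriv (fun w => g w * M w) v = θ * g' * M v := by
  rw [(hg.fun_mul hM).deriv]
  field_simp
  ring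

theorem flux_centered (hθ : θ ≠ 0) (c : ℝ)
    (hM : ∀ v, HasDerivAt M (-(deriv W v / θ) * M v) v) :
    (fun v => deriv W v * (-(1 / θ) * (v - c) * M v)
        + θ * deriv (fun w => -(1 / θ) * (w - c) * M w) v) = fun v => -M v := by
  funext v
  have hg : HasDerivAt (fun w => -(1 / θ) * (w - c)) (-(1 / θ) * 1) v :=
    ((hasDerivAt_id v).sub_const c).const_mul _
  rw [flux_mul_of_zero_flux hθ (hM v) hg]
  field_simp

theorem Qop1_centered (hθ : θ ≠ 0) (c v : ℝ)
    (hM : ∀ v, HasDerivAt M (-(deriv W v / θ) * M v) v) :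
    Qop1 θ W (fun w => -(1 / θ) * (w - c) * M w) v = 1 / θ * deriv W v * M v := by
  rw [Qop1, flux_centered hθ c hM, deriv.fun_neg, (hM v).deriv]
  ring

theorem integral_sq_sub_mean_mul {μ : Measure ℝ} (hM : Integrable M μ)
    (hvM : Integrable (fun v => v * M v) μ) (hv2M : Integrable (fun v => v ^ 2 * M v) μ)
    (hM_one : ∫ v, M v ∂μ = 1) (c : ℝ) (hc : c = ∫ v, v * M v ∂μ) :
    ∫ v, (v - c) ^ 2 * M v ∂μ = ∫ v, v * ((v - c) * M v) ∂μ := by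
  have hvcM : Integrable (fun v => (v - c) * M v) μ :=
    (hvM.sub (hM.const_mul c)).congr (ae_of_all _ fun v => by simp only [Pi.sub_apply]; ring)
  have hv2cM : Integrable (fun v => v * ((v - c) * M v)) μ :=
    (hv2M.sub (hvM.const_mul c)).congr (ae_of_all _ fun v => by simp only [Pi.sub_apply]; ring)
  have hsqM : Integrable (fun v => (v - c) ^ 2 * M v) μ :=
    (hv2cM.sub (hvcM.const_mul c)).congr (ae_of_all _ fun v => by simp only [Pi.sub_apply]; ring)
  have hcentered : ∫ v, (v - c) * M v ∂μ = 0 := by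
    simp only [sub_mul, integral_sub hvM (hM.const_mul c), integral_const_mul, hM_one, ← hc]
    ring
  have hdiff : ∫ v, v * ((v - c) * M v) ∂μ - ∫ v, (v - c) ^ 2 * M v ∂μ
      = c * ∫ v, (v - c) * M v ∂μ := by
    rw [← integral_sub hv2cM hsqM, ← integral_const_mul]
    congr 1; funext v; ring
  rw [hcentered, mul_zero, sub_eq_zero] at hdiff
  exact hdiff.symm

end FokkerPlanck1D

open FokkerPlanck1D in
/-- in dimension one, `ψ(v) = -(1/θ)(v - c) M(v)` with
`c = ∫ v M(v) dv` solves `Q ψ = (1/θ) W' M`, and the drift coefficient is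
`K = -∫ v ψ dv = (1/θ) ∫ (v - c)² M dv`. -/
theorem drift_coefficient_one_dimensional (θ : ℝ) (hθ : 0 < θ)
    (W : ℝ → ℝ) (hW : ContDiff ℝ 2 W)
    (hZint : Integrable (fun v => Real.exp (-W v / θ)))
    (Z : ℝ) (hZ : Z = ∫ v : ℝ, Real.exp (-W v / θ))
    (M : ℝ → ℝ) (hM : ∀ v, M v = Z⁻¹ * Real.exp (-W v / θ))
    (hMint : Integrable M)
    (hvMint : Integrable (fun v => v * M v))
    (hv2Mint : Integrable (fun v => v ^ 2 * M v))
    (c : ℝ) (hc : c = ∫ v : ℝ, v * M v)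
    (ψ : ℝ → ℝ) (hψ : ∀ v, ψ v = -(1 / θ) * (v - c) * M v) :
    (∀ v, Qop1 θ W ψ v = 1 / θ * deriv W v * M v)
    ∧ (-∫ v : ℝ, v * ψ v) = 1 / θ * ∫ v : ℝ, (v - c) ^ 2 * M v := by
  obtain rfl : ψ = fun v => -(1 / θ) * (v - c) * M v := funext hψ
  obtain rfl : M = fun v => Z⁻¹ * Real.exp (-W v / θ) := funext hM
  have hMderiv (v : ℝ) := hasDerivAt_gibbs ((hW.differentiable (by norm_num)) v) θ Z
  have hM_one : ∫ v : ℝ, Z⁻¹ * Real.exp (-W v / θ) = 1 := hZ ▸ integral_gibbs_eq_one hZint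
  refine ⟨fun v => Qop1_centered hθ.ne' c v hMderiv, ?_⟩
  rw [integral_sq_sub_mean_mul hMint hvMint hv2Mint hM_one c hc, ← integral_const_mul,
    ← integral_neg]
  congr 1
  funext v
  ring
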